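/- arXiv:2207.04363 — 4 statements merged into one kernel-verified Lean document; each statement's English description precedes it below -/
import Mathlib

section
/- For all natural numbers m and n and every real ω ≥ 0, ∫_0^∞ x^{m+n} · e^{−x} · F_m(ω·x) dx = b_m(n, ω), i.e. ∫_0^∞ x^{m+n} e^{−x} (Σ_{k=0}^∞ (m!/((m+k)!·k!))·ω^k·x^k) dx = e^ω · Σ_{k=0}^{n} (n!·(m+n)!·m!/((n−k)!·k!·(m+k)!))·ω^k. -/
/-- The entire function `F_m(y) = ∑_{k=0}^∞ (m! / ((m+k)! k!)) y^k`
(a normalized `₀F₁` hypergeometric-type series scaled by `m!`). -/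
noncomputable def F (m : ℕ) (y : ℝ) : ℝ :=
  ∑' k : ℕ, ((m.factorial : ℝ) / ((m + k).factorial * k.factorial)) * y ^ k

/-- `b_m(n, ω) = e^ω ∑_{k=0}^n (n! (m+n)! m! / ((n-k)! k! (m+k)!)) ω^k`. -/
noncomputable def b (m n : ℕ) (ω : ℝ) : ℝ :=
  Real.exp ω * ∑ k ∈ Finset.range (n + 1),
    ((n.factorial : ℝ) * (m + n).factorial * m.factorial /
      ((n - k).factorial * k.factorial * (m + k).factorial)) * ω ^ k

/-!
Expanding `F m (ω x)` and integrating termwise, the `k`-th term contributes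
`m! / ((m+k)! k!) · ω^k · (m+n+k)!` by `Γ(m+n+k+1) = (m+n+k)!`; the exchange is justified by
absolute convergence, since `(m+n+k)! ≤ 2^(m+n+k) n! (m+k)!`. On the other side, the Cauchy
product of the exponential series with the polynomial in `b` has the same coefficients by
Vandermonde's identity `∑_{i+j=k} C(m+k, i) C(n, j) = C(m+n+k, k)`.
-/

open MeasureTheory Set Finset Real
open scoped Nat

lemma integrableOn_exp_neg_mul_pow (p : ℕ) :
    IntegrableOn (fun x : ℝ => exp (-x) * x ^ p) (Ioi 0) := by
  simpa [Real.rpow_natCast] using GammaIntegral_convergent (s := (p : ℝ) + 1) (by positivity)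

lemma integral_exp_neg_mul_pow (p : ℕ) : ∫ x in Ioi (0 : ℝ), exp (-x) * x ^ p = p ! := by
  simpa [Real.rpow_natCast, Gamma_nat_eq_factorial] using
    (Gamma_eq_integral (s := (p : ℝ) + 1) (by positivity)).symm

theorem integral_pow_mul_exp_neg_mul_tsum (p : ℕ) (c : ℕ → ℝ) (y : ℝ)
    (hc : Summable fun k => |c k * y ^ k| * (p + k)!) :
    ∫ x in Ioi (0 : ℝ), x ^ p * exp (-x) * ∑' k, c k * (y * x) ^ k =
      ∑' k, c k * y ^ k * (p + k)! := by
  set f : ℕ → ℝ → ℝ := fun k x => c k * y ^ k * (exp (-x) * x ^ (p + k))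
  have hf_int (k : ℕ) : Integrable (f k) (volume.restrict (Ioi 0)) :=
    (integrableOn_exp_neg_mul_pow (p + k)).const_mul _
  have hf_norm (k : ℕ) : ∫ x in Ioi (0 : ℝ), ‖f k x‖ = |c k * y ^ k| * (p + k)! := by
    rw [← integral_exp_neg_mul_pow, ← integral_const_mul]
    refine setIntegral_congr_fun measurableSet_Ioi fun x (hx : 0 < x) => ?_
    rw [norm_mul, norm_of_nonneg (r := exp (-x) * x ^ (p + k)) (by positivity), norm_eq_abs]
  calc ∫ x in Ioi (0 : ℝ), x ^ p * exp (-x) * ∑' k, c k * (y * x) ^ k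
      = ∫ x in Ioi (0 : ℝ), ∑' k, f k x := by
        refine setIntegral_congr_fun measurableSet_Ioi fun x _ => ?_
        rw [← tsum_mul_left]
        congr 1 with k
        ring
    _ = ∑' k, ∫ x in Ioi (0 : ℝ), f k x :=
        (integral_tsum_of_summable_integral_norm hf_int (by simpa only [hf_norm] using hc)).symm
    _ = ∑' k, c k * y ^ k * (p + k)! := by
        simp only [f, integral_const_mul, integral_exp_neg_mul_pow]

lemma factorial_add_add_le (m n k : ℕ) :
    (m + n + k)! ≤ 2 ^ (m + n) * n ! * (2 ^ k * (m + k)!) := by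
  calc (m + n + k)! = (m + k + n).choose n * (m + k)! * n ! := by
        rw [Nat.add_choose_mul_factorial_mul_factorial, Nat.add_right_comm]
    _ ≤ 2 ^ (m + k + n) * (m + k)! * n ! := by gcongr; exact Nat.choose_le_two_pow _ _
    _ = 2 ^ (m + n) * n ! * (2 ^ k * (m + k)!) := by ring

lemma summable_abs_mul_factorial (m n : ℕ) (y : ℝ) :
    Summable fun k => |(m ! : ℝ) / ((m + k)! * k !) * y ^ k| * (m + n + k)! := by
  refine .of_nonneg_of_le (fun k => by positivity) (fun k => ?_)
    ((summable_pow_div_factorial (2 * |y|)).mul_left ((m ! : ℝ) * 2 ^ (m + n) * n !))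
  have hle : ((m + n + k)! : ℝ) ≤ 2 ^ (m + n) * n ! * (2 ^ k * (m + k)!) := by
    exact_mod_cast factorial_add_add_le m n k
  rw [abs_mul, abs_of_nonneg (by positivity), abs_pow]
  calc (m ! : ℝ) / ((m + k)! * k !) * |y| ^ k * (m + n + k)!
      ≤ (m ! : ℝ) / ((m + k)! * k !) * |y| ^ k * (2 ^ (m + n) * n ! * (2 ^ k * (m + k)!)) := by
        gcongr
    _ = m ! * 2 ^ (m + n) * n ! * ((2 * |y|) ^ k / k !) := by
        field_simp
        ring

/-- The coefficients of the polynomial in `b`, written with `n.choose j` so that they vanish for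
`j > n` instead of picking up the junk value `(n - j)! = 0! = 1`. -/
noncomputable def bCoeff (m n j : ℕ) : ℝ := (m + n)! * m ! * n.choose j / (m + j)!

lemma b_eq_exp_mul_tsum_bCoeff (m n : ℕ) (ω : ℝ) :
    b m n ω = exp ω * ∑' j, bCoeff m n j * ω ^ j := by
  rw [b, tsum_eq_sum (s := range (n + 1)) fun j hj => by
    simp [bCoeff, Nat.choose_eq_zero_of_lt (show n < j by simpa using hj)]]
  congr 1
  refine sum_congr rfl fun j hj => ?_
  rw [bCoeff, Nat.cast_choose ℝ (show j ≤ n by simpa [Nat.lt_succ_iff] using hj)]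
  field_simp

lemma sum_antidiagonal_bCoeff_div_factorial (m n k : ℕ) :
    ∑ ij ∈ antidiagonal k, bCoeff m n ij.2 / ij.1 ! =
      (m ! : ℝ) / ((m + k)! * k !) * (m + n + k)! := by
  have hterm : ∀ ij ∈ antidiagonal k, bCoeff m n ij.2 / ij.1 ! =
      (m + n)! * m ! / (m + k)! * ((m + k).choose ij.1 * n.choose ij.2 : ℕ) := by
    rintro ⟨i, j⟩ hij
    obtain rfl : i + j = k := mem_antidiagonal.mp hij
    have hchoose_i : ((m + (i + j)).choose i : ℝ) = (m + (i + j))! / (i ! * (m + j)!) := by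
      rw [show m + (i + j) = i + (m + j) by ring]
      exact Nat.cast_add_choose ℝ
    push_cast
    rw [hchoose_i, bCoeff]
    field_simp
  have hchoose_k : ((m + n + k).choose k : ℝ) = (m + n + k)! / (k ! * (m + n)!) := by
    rw [show m + n + k = k + (m + n) by ring]
    exact Nat.cast_add_choose ℝ
  rw [sum_congr rfl hterm, ← mul_sum, ← Nat.cast_sum, ← Nat.add_choose_eq,
    show m + k + n = m + n + k by ring, hchoose_k]
  field_simp

lemma exp_mul_tsum_bCoeff (m n : ℕ) (ω : ℝ) :
    exp ω * ∑' j, bCoeff m n j * ω ^ j =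
      ∑' k, (m ! : ℝ) / ((m + k)! * k !) * ω ^ k * (m + n + k)! := by
  have hexp : Summable fun i => ‖ω ^ i / (i ! : ℝ)‖ := by
    simpa [norm_div, norm_pow] using summable_pow_div_factorial |ω|
  have hpoly : Summable fun j => ‖bCoeff m n j * ω ^ j‖ :=
    summable_of_ne_finset_zero (s := range (n + 1)) fun j hj => by
      simp [bCoeff, Nat.choose_eq_zero_of_lt (show n < j by simpa using hj)]
  rw [exp_eq_exp_ℝ, NormedSpace.exp_eq_tsum_div,
    tsum_mul_tsum_eq_tsum_sum_antidiagonal_of_summable_norm hexp hpoly]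
  congr 1 with k
  rw [mul_right_comm, ← sum_antidiagonal_bCoeff_div_factorial, sum_mul]
  refine sum_congr rfl fun ij hij => ?_
  rw [← mem_antidiagonal.mp hij, pow_add]
  ring

theorem stmt4_general (m n : ℕ) (ω : ℝ) :
    ∫ x in Set.Ioi (0 : ℝ), x ^ (m + n) * Real.exp (-x) * F m (ω * x) = b m n ω := by
  rw [b_eq_exp_mul_tsum_bCoeff, exp_mul_tsum_bCoeff,
    ← integral_pow_mul_exp_neg_mul_tsum _ _ _ (summable_abs_mul_factorial m n ω)]
  rfl

/-- Closed-form evaluation of the paper's quantities `b_{i,j}` (Kummer transformation):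
`∫_0^∞ x^{m+n} e^{-x} F_m(ω x) dx = b_m(n, ω)` for `ω ≥ 0`. -/
theorem stmt4 (m n : ℕ) (ω : ℝ) (hω : 0 ≤ ω) :
    ∫ x in Set.Ioi (0 : ℝ), x ^ (m + n) * Real.exp (-x) * F m (ω * x) = b m n ω :=
  stmt4_general m n ω
end

section
/- For all natural numbers m and K, every real γ ≥ 0, and every real ω ≥ 0, ∫_0^∞ x^m · e^{−x} · (1 + γx)^K · F_m(ω·x) dx = Σ_{n=0}^{K} binom(K, n) · γ^n · b_m(n, ω). -/
/-!
Expanding `(1 + γ x)^K` binomially reduces the claim to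
`∫_0^∞ x^(m+n) e^(-x) F_m(ω x) dx = b_m(n, ω)`. Integrating the series of `F_m` term by term with
`∫_0^∞ x^p e^(-x) dx = p!` turns the left side into `∑_k m! (m+n+k)! ω^k / ((m+k)! k!)`, and this is
the Cauchy product of the exponential series with the finite sum in `b_m(n, ω)`: the coefficients
match by Vandermonde's identity `∑_i C(n, i) C(m+k, k-i) = C(m+n+k, k)`.
-/

open MeasureTheory Set Filter Finset
open scoped Nat

section SeriesIntegration

variable {α E : Type*} [MeasurableSpace α] {μ : Measure α}
  [NormedAddCommGroup E] {G : ℕ → α → E} {f : α → E}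

theorem integrable_of_hasSum_of_summable_integral_norm (hG_int : ∀ i, Integrable (G i) μ)
    (hG_sum : Summable fun i ↦ ∫ a, ‖G i a‖ ∂μ) (hG : ∀ᵐ a ∂μ, HasSum (G · a) (f a)) :
    Integrable f μ := by
  refine ⟨aestronglyMeasurable_of_tendsto_ae atTop
    (fun N ↦ Finset.aestronglyMeasurable_sum _ fun i _ ↦ (hG_int i).1)
    (hG.mono fun a ha ↦ by simpa only [Finset.sum_apply] using ha.tendsto_sum_nat), ?_⟩
  have hlintegral : ∑' i, ∫⁻ a, ‖G i a‖ₑ ∂μ = ENNReal.ofReal (∑' i, ∫ a, ‖G i a‖ ∂μ) := by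
    rw [ENNReal.ofReal_tsum_of_nonneg (fun i ↦ integral_nonneg fun a ↦ norm_nonneg _) hG_sum]
    exact tsum_congr fun i ↦ (ofReal_integral_norm_eq_lintegral_enorm (hG_int i)).symm
  calc ∫⁻ a, ‖f a‖ₑ ∂μ ≤ ∫⁻ a, ∑' i, ‖G i a‖ₑ ∂μ :=
        lintegral_mono_ae (hG.mono fun a ha ↦ ha.tsum_eq ▸ enorm_tsum_le_tsum_enorm)
    _ = ∑' i, ∫⁻ a, ‖G i a‖ₑ ∂μ := lintegral_tsum fun i ↦ (hG_int i).1.enorm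
    _ < ⊤ := hlintegral ▸ ENNReal.ofReal_lt_top

theorem hasSum_integral_of_hasSum_of_summable_integral_norm [NormedSpace ℝ E]
    (hG_int : ∀ i, Integrable (G i) μ) (hG_sum : Summable fun i ↦ ∫ a, ‖G i a‖ ∂μ)
    (hG : ∀ᵐ a ∂μ, HasSum (G · a) (f a)) :
    HasSum (fun i ↦ ∫ a, G i a ∂μ) (∫ a, f a ∂μ) := by
  rw [integral_congr_ae (hG.mono fun a ha ↦ ha.tsum_eq.symm)]
  exact hasSum_integral_of_summable_integral_norm hG_int hG_sum

end SeriesIntegration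

theorem integrableOn_pow_mul_exp_neg (p : ℕ) :
    IntegrableOn (fun x : ℝ ↦ x ^ p * Real.exp (-x)) (Ioi 0) := by
  refine (Real.GammaIntegral_convergent (s := (p : ℝ) + 1) (by positivity)).congr_fun
    (fun x _ ↦ ?_) measurableSet_Ioi
  dsimp only
  rw [add_sub_cancel_right, Real.rpow_natCast, mul_comm]

theorem integral_pow_mul_exp_neg (p : ℕ) :
    ∫ x in Ioi (0 : ℝ), x ^ p * Real.exp (-x) = p ! := by
  rw [← Real.Gamma_nat_eq_factorial, Real.Gamma_eq_integral (by positivity)]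
  refine setIntegral_congr_fun measurableSet_Ioi fun x _ ↦ ?_
  rw [add_sub_cancel_right, Real.rpow_natCast, mul_comm]

theorem integral_norm_mul_pow_mul_exp_neg (c : ℝ) (p : ℕ) :
    ∫ x in Ioi (0 : ℝ), ‖c * (x ^ p * Real.exp (-x))‖ = ‖c * (p ! : ℝ)‖ := by
  have hnonneg : ∀ x ∈ Ioi (0 : ℝ), ‖c * (x ^ p * Real.exp (-x))‖ = ‖c‖ * (x ^ p * Real.exp (-x)) :=
    fun x (hx : 0 < x) ↦ by
      rw [norm_mul, Real.norm_of_nonneg (show 0 ≤ x ^ p * Real.exp (-x) by positivity)]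
  rw [setIntegral_congr_fun measurableSet_Ioi hnonneg, integral_const_mul, integral_pow_mul_exp_neg,
    norm_mul, Real.norm_natCast]

theorem summable_F_series (m : ℕ) (y : ℝ) :
    Summable fun k : ℕ ↦ ((m ! : ℝ) / ((m + k)! * k !)) * y ^ k := by
  refine (Real.summable_pow_div_factorial |y|).of_norm_bounded fun k ↦ ?_
  have hfac : (m ! : ℝ) ≤ (m + k)! := by exact_mod_cast Nat.factorial_le (Nat.le_add_right m k)
  calc ‖(m ! : ℝ) / ((m + k)! * k !) * y ^ k‖ = (m ! : ℝ) / ((m + k)! * k !) * |y| ^ k := by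
        rw [norm_mul, norm_pow, Real.norm_of_nonneg (by positivity), Real.norm_eq_abs]
    _ ≤ (m + k)! / ((m + k)! * k !) * |y| ^ k := by gcongr
    _ = |y| ^ k / k ! := by field_simp

theorem hasSum_pow_mul_exp_neg_mul_F (m p : ℕ) (ω x : ℝ) :
    HasSum (fun k ↦ ((m ! : ℝ) / ((m + k)! * k !) * ω ^ k) * (x ^ (p + k) * Real.exp (-x)))
      (x ^ p * Real.exp (-x) * F m (ω * x)) :=
  ((summable_F_series m (ω * x)).hasSum.mul_left _).congr_fun fun k ↦ by ring

theorem sum_range_choose_mul_choose_sub (n l k : ℕ) :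
    ∑ i ∈ range (k + 1), n.choose i * l.choose (k - i) = (n + l).choose k := by
  rw [Nat.add_choose_eq, Finset.Nat.sum_antidiagonal_eq_sum_range_succ_mk]

theorem hasSum_b (m n : ℕ) (ω : ℝ) :
    HasSum (fun k ↦ ((m ! : ℝ) / ((m + k)! * k !) * ω ^ k) * (m + n + k)!) (b m n ω) := by
  -- The coefficients of the finite sum in `b`, written with `n.choose i` so that they vanish
  -- for `i > n` (where `(n - i)!` in `b` would be a truncated-subtraction artefact).
  set a : ℕ → ℝ := fun i ↦ n.choose i * ((m ! * (m + n)! : ℝ) / (m + i)!) * ω ^ i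
  have ha_zero : ∀ i ∉ range (n + 1), a i = 0 := fun i hi ↦ by
    simp [a, Nat.choose_eq_zero_of_lt (by simpa using hi : n < i)]
  have hexp := NormedSpace.expSeries_div_hasSum_exp ω
  have hb : b m n ω = (∑' i, a i) * ∑' j, ω ^ j / j ! := by
    rw [tsum_eq_sum ha_zero, hexp.tsum_eq, ← Real.exp_eq_exp_ℝ, b, mul_comm]
    congr 1
    refine Finset.sum_congr rfl fun i hi ↦ ?_
    simp only [a]
    rw [Nat.cast_choose ℝ (Nat.lt_succ_iff.mp (mem_range.mp hi))]
    field_simp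
  rw [hb]
  refine (hasSum_sum_range_mul_of_summable_norm ?_ hexp.summable.norm).congr_fun fun k ↦ ?_
  · exact summable_of_ne_finset_zero (s := range (n + 1)) fun i hi ↦ by simp [ha_zero i hi]
  have hterm : ∀ i ∈ range (k + 1), a i * (ω ^ (k - i) / (k - i)!) =
      (m ! * (m + n)! / (m + k)! : ℝ) * ω ^ k * (n.choose i * (m + k).choose (k - i) : ℕ) := by
    intro i hi
    have hik : i ≤ k := Nat.lt_succ_iff.mp (mem_range.mp hi)
    simp only [a]
    rw [Nat.cast_mul, Nat.cast_choose ℝ (by omega : k - i ≤ m + k),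
      show m + k - (k - i) = m + i by omega, ← pow_sub_mul_pow ω hik]
    field_simp
  rw [Finset.sum_congr rfl hterm, ← Finset.mul_sum, ← Nat.cast_sum,
    sum_range_choose_mul_choose_sub, Nat.cast_choose ℝ (by omega : k ≤ n + (m + k)),
    show n + (m + k) - k = m + n by omega,
    show n + (m + k) = m + n + k by omega]
  field_simp

theorem summable_integral_norm_F_terms (m n : ℕ) (ω : ℝ) :
    Summable fun k ↦ ∫ x in Ioi (0 : ℝ),
      ‖((m ! : ℝ) / ((m + k)! * k !) * ω ^ k) * (x ^ (m + n + k) * Real.exp (-x))‖ :=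
  (hasSum_b m n ω).summable.norm.congr fun _ ↦ (integral_norm_mul_pow_mul_exp_neg _ _).symm

theorem integrableOn_pow_mul_exp_neg_mul_F (m n : ℕ) (ω : ℝ) :
    IntegrableOn (fun x ↦ x ^ (m + n) * Real.exp (-x) * F m (ω * x)) (Ioi 0) :=
  integrable_of_hasSum_of_summable_integral_norm
    (fun _ ↦ (integrableOn_pow_mul_exp_neg _).const_mul _) (summable_integral_norm_F_terms m n ω)
    (ae_of_all _ (hasSum_pow_mul_exp_neg_mul_F m (m + n) ω))

theorem integral_pow_mul_exp_neg_mul_F (m n : ℕ) (ω : ℝ) :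
    ∫ x in Ioi (0 : ℝ), x ^ (m + n) * Real.exp (-x) * F m (ω * x) = b m n ω := by
  have hintegrals := hasSum_integral_of_hasSum_of_summable_integral_norm
    (fun _ ↦ (integrableOn_pow_mul_exp_neg _).const_mul _) (summable_integral_norm_F_terms m n ω)
    (ae_of_all _ (hasSum_pow_mul_exp_neg_mul_F m (m + n) ω))
  simp only [integral_const_mul, integral_pow_mul_exp_neg] at hintegrals
  exact hintegrals.unique (hasSum_b m n ω)

theorem stmt5_general (m K : ℕ) (γ ω : ℝ) :
    ∫ x in Set.Ioi (0 : ℝ), x ^ m * Real.exp (-x) * (1 + γ * x) ^ K * F m (ω * x) =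
      ∑ n ∈ Finset.range (K + 1), (K.choose n : ℝ) * γ ^ n * b m n ω := by
  have hexpand : ∀ x : ℝ, x ^ m * Real.exp (-x) * (1 + γ * x) ^ K * F m (ω * x) =
      ∑ n ∈ range (K + 1), (K.choose n * γ ^ n) * (x ^ (m + n) * Real.exp (-x) * F m (ω * x)) := by
    intro x
    rw [add_comm 1, add_pow, Finset.mul_sum, Finset.sum_mul]
    refine Finset.sum_congr rfl fun n _ ↦ ?_
    ring
  simp_rw [hexpand]
  rw [integral_finsetSum _ fun n _ ↦ (integrableOn_pow_mul_exp_neg_mul_F m n ω).const_mul _]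
  refine Finset.sum_congr rfl fun n _ ↦ ?_
  rw [integral_const_mul, integral_pow_mul_exp_neg_mul_F]

/-- Evaluation of the auxiliary function `𝒦_i^{(1)}` of Appendix A:
`∫_0^∞ x^m e^{-x} (1 + γ x)^K F_m(ω x) dx = ∑_{n=0}^K C(K,n) γ^n b_m(n, ω)`. -/
theorem stmt5 (m K : ℕ) (γ ω : ℝ) (hγ : 0 ≤ γ) (hω : 0 ≤ ω) :
    ∫ x in Set.Ioi (0 : ℝ), x ^ m * Real.exp (-x) * (1 + γ * x) ^ K * F m (ω * x) =
      ∑ n ∈ Finset.range (K + 1), (K.choose n : ℝ) * γ ^ n * b m n ω :=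
  stmt5_general m K γ ω
end

section
/- (Generalized Andréief integral identity.) Let μ be a σ-finite measure on ℝ, let n ≥ 1, and let f, g : Fin n → ℝ → ℂ be measurable functions such that for all i, j the product x ↦ f_i(x)·g_j(x) is μ-integrable and such that the function (x_1,…,x_n) ↦ det[f_i(x_j)]_{i,j} · det[g_i(x_j)]_{i,j} is integrable with respect to the n-fold product measure μ^⊗n. Then ∫_{ℝ^n} det[f_i(x_j)]_{i,j} · det[g_i(x_j)]_{i,j} dμ^⊗n(x_1,…,x_n) = n! · det[∫_ℝ f_i(x)·g_j(x) dμ(x)]_{i,j}. -/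
/-!
Expanding `det[f i (x j)]` over permutations, `det[f i (x j)] * ∏ j, h j (x j)` becomes a signed
sum of products of functions of separate coordinates, so Fubini gives
`∫ det[f i (x j)] * ∏ j, h j (x j) = det[∫ f i * h j]`. Expanding `det[g i (x j)]` as well, the
term of a permutation `σ` is this identity for `h = g ∘ σ`, whose right side is a column
permutation of `det[∫ f i * g j]`; its sign cancels that of the expansion, so all `n!` terms
are equal.
-/

open MeasureTheory Matrix Equiv

namespace Andreief

variable {ι α 𝕜 : Type*} [Fintype ι] [DecidableEq ι]

theorem det_of_apply_mul_prod [CommRing 𝕜] (f h : ι → α → 𝕜) (x : ι → α) :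
    (of fun i j => f i (x j)).det * ∏ j, h j (x j)
      = ∑ τ : Perm ι, ((Perm.sign τ : ℤ) : 𝕜) * ∏ j, f (τ j) (x j) * h j (x j) := by
  simp only [det_apply', of_apply, Finset.sum_mul, mul_assoc, Finset.prod_mul_distrib]

theorem sign_mul_sign_mul [Ring 𝕜] (σ : Perm ι) (a : 𝕜) :
    ((Perm.sign σ : ℤ) : 𝕜) * (((Perm.sign σ : ℤ) : 𝕜) * a) = a := by
  rw [← mul_assoc, ← Int.cast_mul, ← Units.val_mul, Int.units_mul_self, Units.val_one,
    Int.cast_one, one_mul]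

variable [MeasurableSpace α] [RCLike 𝕜] {μ : Measure α} [SigmaFinite μ] {f g h : ι → α → 𝕜}

theorem integrable_det_of_apply_mul_prod (hfh : ∀ i j, Integrable (fun x => f i x * h j x) μ) :
    Integrable (fun x : ι → α => (of fun i j => f i (x j)).det * ∏ j, h j (x j))
      (Measure.pi fun _ => μ) := by
  simp only [det_of_apply_mul_prod]
  exact integrable_finsetSum _ fun τ _ =>
    (Integrable.fintype_prod fun j => hfh (τ j) j).const_mul _

theorem integral_det_of_apply_mul_prod (hfh : ∀ i j, Integrable (fun x => f i x * h j x) μ) :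
    ∫ x : ι → α, (of fun i j => f i (x j)).det * ∏ j, h j (x j) ∂(Measure.pi fun _ => μ)
      = (of fun i j => ∫ x, f i x * h j x ∂μ).det := by
  simp only [det_of_apply_mul_prod]
  rw [integral_finsetSum _ fun τ _ =>
    (Integrable.fintype_prod fun j => hfh (τ j) j).const_mul _]
  simp only [integral_const_mul, det_apply', of_apply]
  exact Finset.sum_congr rfl fun τ _ => by
    rw [integral_fintype_prod_eq_prod fun j y => f (τ j) y * h j y]

theorem integral_det_mul_det (hfg : ∀ i j, Integrable (fun x => f i x * g j x) μ) :
    ∫ x : ι → α, (of fun i j => f i (x j)).det * (of fun i j => g i (x j)).det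
        ∂(Measure.pi fun _ => μ)
      = (Fintype.card ι).factorial * (of fun i j => ∫ x, f i x * g j x ∂μ).det := by
  set M := of fun i j => ∫ x, f i x * g j x ∂μ
  have hexpand : ∀ x : ι → α, (of fun i j => f i (x j)).det * (of fun i j => g i (x j)).det
      = ∑ σ : Perm ι, ((Perm.sign σ : ℤ) : 𝕜) *
          ((of fun i j => f i (x j)).det * ∏ j, g (σ j) (x j)) := by
    intro x
    simp only [det_apply' (of fun i j => g i (x j)), of_apply, Finset.mul_sum]
    exact Finset.sum_congr rfl fun σ _ => by ring
  have hpermuted : ∀ σ : Perm ι,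
      ∫ x : ι → α, (of fun i j => f i (x j)).det * ∏ j, g (σ j) (x j) ∂(Measure.pi fun _ => μ)
        = ((Perm.sign σ : ℤ) : 𝕜) * M.det := by
    intro σ
    rw [integral_det_of_apply_mul_prod fun i j => hfg i (σ j), ← det_permute' σ M]
    rfl
  simp only [hexpand]
  rw [integral_finsetSum _ fun σ _ =>
    (integrable_det_of_apply_mul_prod fun i j => hfg i (σ j)).const_mul _]
  simp only [integral_const_mul, hpermuted, sign_mul_sign_mul, Finset.sum_const,
    Finset.card_univ, Fintype.card_perm, nsmul_eq_mul]

end Andreief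

theorem stmt6_general (μ : Measure ℝ) [SigmaFinite μ] (n : ℕ)
    (f g : Fin n → ℝ → ℂ)
    (hfg : ∀ i j, Integrable (fun x => f i x * g j x) μ) :
    ∫ x : Fin n → ℝ,
        (Matrix.of fun i j => f i (x j)).det * (Matrix.of fun i j => g i (x j)).det
        ∂(Measure.pi fun _ => μ)
      = (n.factorial : ℂ) * (Matrix.of fun i j => ∫ x, f i x * g j x ∂μ).det := by
  simpa using Andreief.integral_det_mul_det hfg

/-- Generalized Andréief integral identity: for a σ-finite measure `μ` on `ℝ`,
`n ≥ 1`, and measurable `f g : Fin n → ℝ → ℂ` with all products `f i * g j`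
`μ`-integrable and the product of determinants integrable with respect to the
`n`-fold product measure,
`∫ det[f i (x j)] det[g i (x j)] dμ^⊗n = n! det[∫ f i x * g j x dμ]`. -/
theorem stmt6 (μ : Measure ℝ) [SigmaFinite μ] (n : ℕ) (hn : 1 ≤ n)
    (f g : Fin n → ℝ → ℂ)
    (hf : ∀ i, Measurable (f i)) (hg : ∀ i, Measurable (g i))
    (hfg : ∀ i j, Integrable (fun x => f i x * g j x) μ)
    (hdet : Integrable
      (fun x : Fin n → ℝ =>
        (Matrix.of fun i j => f i (x j)).det * (Matrix.of fun i j => g i (x j)).det)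
      (Measure.pi fun _ => μ)) :
    ∫ x : Fin n → ℝ,
        (Matrix.of fun i j => f i (x j)).det * (Matrix.of fun i j => g i (x j)).det
        ∂(Measure.pi fun _ => μ)
      = (n.factorial : ℂ) * (Matrix.of fun i j => ∫ x, f i x * g j x ∂μ).det :=
  stmt6_general μ n f g hfg
end

section
/- Let m, K, q be natural numbers with 0 ≤ q ≤ K and K ≥ 1, and let ω_1, …, ω_q ≥ 0 be real numbers. Then ∫_{[0,∞)^K} det[λ_i^{j−1}]_{i,j=1..K} · det M(λ) · Π_{i=1}^K λ_i^m e^{−λ_i} dλ_1⋯dλ_K = K! · det B, where M(λ) is the K×K matrix with entries M_{i,j} = λ_i^{j−1} for 1 ≤ j ≤ K−q and M_{i,j} = F_m(ω_{j−(K−q)}·λ_i) for K−q < j ≤ K, and B is the K×K matrix with entries B_{i,j} = (m+i+j−2)! for 1 ≤ j ≤ K−q and B_{i,j} = b_m(i−1, ω_{j−(K−q)}) for K−q < j ≤ K. -/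
open MeasureTheory

/-!
Expanding both determinants over permutations and integrating coordinatewise gives Andréief's
identity `∫ det[f_j(x_i)] det[g_j(x_i)] dμ^K = K! det[∫ f_a g_b dμ]`. Take `μ` Lebesgue measure
on `(0, ∞)`, `f_j(x) = x^j`, and absorb the weight `x^m e^{-x}` into the columns `g_j`. The
entries are then Gamma integrals: `∫ x^{m+i+j} e^{-x} = (m+i+j)!` for the polynomial columns,
while for the `F_m` columns term-by-term integration (all terms are nonnegative since `ω ≥ 0`)
gives `∑_k m! ω^k (i+m+k)! / ((m+k)! k!)`. A Cauchy product with `e^ω = ∑ ω^j / j!` and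
Vandermonde's identity `∑_k C(i,k) C(m+n,n-k) = C(i+m+n,n)` identify this series with
`b_m(i, ω)`.
-/

open Set Finset Nat Equiv Matrix

section Andreief

variable {α ι 𝕜 : Type*} [MeasurableSpace α] [Fintype ι] [DecidableEq ι] [RCLike 𝕜]

theorem det_mul_det_eq_sum_perm (A B : Matrix ι ι 𝕜) :
    A.det * B.det = ∑ σ : Perm ι, ∑ τ : Perm ι,
      ((Perm.sign σ * Perm.sign τ : ℤ) : 𝕜) * ∏ i, (A i (σ i) * B i (τ i)) := by
  rw [← det_transpose A, ← det_transpose B, det_apply', det_apply', Finset.sum_mul_sum]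
  simp only [transpose_apply, Finset.prod_mul_distrib]
  push_cast
  refine Finset.sum_congr rfl fun σ _ => Finset.sum_congr rfl fun τ _ => by ring

theorem sum_perm_sign_mul_prod_eq_det (G : Matrix ι ι 𝕜) (σ : Perm ι) :
    ∑ τ : Perm ι, ((Perm.sign σ * Perm.sign τ : ℤ) : 𝕜) * ∏ i, G (σ i) (τ i) = G.det := by
  have h := det_permute σ G
  rw [← det_transpose, det_apply'] at h
  have hσ : ((Perm.sign σ : ℤ) : 𝕜) * Perm.sign σ = 1 := by
    rw [← Int.cast_mul, ← Units.val_mul, Int.units_mul_self, Units.val_one, Int.cast_one]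
  calc ∑ τ : Perm ι, ((Perm.sign σ * Perm.sign τ : ℤ) : 𝕜) * ∏ i, G (σ i) (τ i)
      = Perm.sign σ * ∑ τ : Perm ι, ((Perm.sign τ : ℤ) : 𝕜) * ∏ i, G (σ i) (τ i) := by
        rw [Finset.mul_sum]; push_cast; simp only [mul_assoc]
    _ = G.det := by
        simp only [transpose_apply, submatrix_apply, id] at h
        rw [h, ← mul_assoc, hσ, one_mul]

theorem det_of_mul_prod {β R : Type*} [CommRing R] (c : ι → β → R) (w : β → R) (x : ι → β) :
    (of fun i j => c j (x i)).det * ∏ i, w (x i) = (of fun i j => c j (x i) * w (x i)).det := by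
  rw [mul_comm, ← det_mul_column]
  simp only [of_apply, mul_comm]

/-- Andréief's identity. -/
theorem integral_det_mul_det (μ : Measure α) [SigmaFinite μ] (f g : ι → α → 𝕜)
    (hfg : ∀ a b, Integrable (fun x => f a x * g b x) μ) :
    ∫ x : ι → α, (of fun i j => f j (x i)).det * (of fun i j => g j (x i)).det
        ∂(Measure.pi fun _ => μ)
      = ((Fintype.card ι).factorial : 𝕜) * (of fun a b => ∫ x, f a x * g b x ∂μ).det := by
  have hint : ∀ σ τ : Perm ι, Integrable (fun x : ι → α => ((Perm.sign σ * Perm.sign τ : ℤ) : 𝕜) *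
      ∏ i, (f (σ i) (x i) * g (τ i) (x i))) (Measure.pi fun _ => μ) := fun σ τ =>
    (Integrable.fintype_prod fun i => hfg (σ i) (τ i)).const_mul _
  have inner : ∀ σ : Perm ι, ∫ x, ∑ τ : Perm ι, ((Perm.sign σ * Perm.sign τ : ℤ) : 𝕜) *
      ∏ i, (f (σ i) (x i) * g (τ i) (x i)) ∂(Measure.pi fun _ => μ)
        = (of fun a b => ∫ x, f a x * g b x ∂μ).det := fun σ => by
    rw [integral_finsetSum _ fun τ _ => hint σ τ, ← sum_perm_sign_mul_prod_eq_det _ σ]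
    refine Finset.sum_congr rfl fun τ _ => ?_
    rw [integral_const_mul, integral_fintype_prod_eq_prod (fun i x => f (σ i) x * g (τ i) x)]
    rfl
  simp_rw [det_mul_det_eq_sum_perm, of_apply]
  rw [integral_finsetSum _ fun σ _ => integrable_finsetSum _ fun τ _ => hint σ τ]
  simp_rw [inner, Finset.sum_const, Finset.card_univ, Fintype.card_perm, nsmul_eq_mul]

end Andreief

theorem integrableOn_pow_mul_exp_neg_Ioi (n : ℕ) :
    IntegrableOn (fun x : ℝ => x ^ n * Real.exp (-x)) (Ioi 0) := by
  refine (Real.GammaIntegral_convergent (s := n + 1) (by positivity)).congr_fun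
    (fun x _ => ?_) measurableSet_Ioi
  simp only [add_sub_cancel_right, Real.rpow_natCast, mul_comm]

theorem integral_pow_mul_exp_neg_Ioi (n : ℕ) :
    ∫ x in Ioi (0 : ℝ), x ^ n * Real.exp (-x) = n ! := by
  rw [← Real.Gamma_nat_eq_factorial, Real.Gamma_eq_integral (by positivity), add_sub_cancel_right]
  refine setIntegral_congr_fun measurableSet_Ioi fun x _ => ?_
  rw [Real.rpow_natCast, mul_comm]

theorem integrable_tsum_of_nonneg {α : Type*} [MeasurableSpace α] {μ : Measure α}
    {F : ℕ → α → ℝ} (hF_int : ∀ n, Integrable (F n) μ) (hF_nonneg : ∀ n, 0 ≤ᵐ[μ] F n)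
    (hF_sum : ∀ᵐ a ∂μ, Summable fun n => F n a) (h_sum : Summable fun n => ∫ a, F n a ∂μ) :
    Integrable (fun a => ∑' n, F n a) μ := by
  have h_nonneg : ∀ᵐ a ∂μ, ∀ n, 0 ≤ F n a := ae_all_iff.2 hF_nonneg
  refine ⟨aestronglyMeasurable_of_tendsto_ae Filter.atTop
    (fun N => Finset.aestronglyMeasurable_fun_sum (Finset.range N) fun n _ => (hF_int n).1)
    (hF_sum.mono fun a ha => ha.hasSum.tendsto_sum_nat), ?_⟩
  refine (hasFiniteIntegral_iff_ofReal (h_nonneg.mono fun a ha => tsum_nonneg ha)).2 ?_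
  calc ∫⁻ a, ENNReal.ofReal (∑' n, F n a) ∂μ
      = ∫⁻ a, ∑' n, ENNReal.ofReal (F n a) ∂μ := lintegral_congr_ae <|
        (h_nonneg.and hF_sum).mono fun a ha => ENNReal.ofReal_tsum_of_nonneg ha.1 ha.2
    _ = ∑' n, ENNReal.ofReal (∫ a, F n a ∂μ) := by
        rw [lintegral_tsum fun n => (hF_int n).1.aemeasurable.ennreal_ofReal]
        exact tsum_congr fun n => (ofReal_integral_eq_lintegral_ofReal (hF_int n) (hF_nonneg n)).symm
    _ = ENNReal.ofReal (∑' n, ∫ a, F n a ∂μ) :=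
        (ENNReal.ofReal_tsum_of_nonneg (fun n => integral_nonneg_of_ae (hF_nonneg n)) h_sum).symm
    _ < ⊤ := ENNReal.ofReal_lt_top

theorem integral_tsum_of_nonneg {α : Type*} [MeasurableSpace α] {μ : Measure α}
    {F : ℕ → α → ℝ} (hF_int : ∀ n, Integrable (F n) μ) (hF_nonneg : ∀ n, 0 ≤ᵐ[μ] F n)
    (h_sum : Summable fun n => ∫ a, F n a ∂μ) :
    ∫ a, ∑' n, F n a ∂μ = ∑' n, ∫ a, F n a ∂μ := by
  refine (integral_tsum_of_summable_integral_norm hF_int (h_sum.congr fun n => ?_)).symm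
  exact integral_congr_ae <| (hF_nonneg n).mono fun a ha => (Real.norm_of_nonneg ha).symm

theorem summable_F_coeff_mul_pow (m : ℕ) (y : ℝ) :
    Summable fun k : ℕ => (m ! : ℝ) / ((m + k)! * k !) * y ^ k := by
  refine Summable.of_norm_bounded (Real.summable_pow_div_factorial |y|) fun k => ?_
  have hc : (m ! : ℝ) / ((m + k)! * k !) ≤ 1 / k ! := by
    rw [div_le_div_iff₀ (by positivity) (by positivity), one_mul]
    exact mul_le_mul_of_nonneg_right (mod_cast factorial_le (le_add_right m k)) (by positivity)
  rw [norm_mul, Real.norm_of_nonneg (by positivity), norm_pow, Real.norm_eq_abs,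
    div_eq_mul_one_div (|y| ^ k), mul_comm (|y| ^ k)]
  exact mul_le_mul_of_nonneg_right hc (by positivity)

theorem hasSum_F_coeff_mul_factorial (m p : ℕ) (ω : ℝ) :
    HasSum (fun k => (m ! : ℝ) / ((m + k)! * k !) * ω ^ k * (p + m + k)!) (b m p ω) := by
  set u : ℕ → ℝ := fun k => p.choose k * ((m + p)! * m ! / (m + k)!) * ω ^ k
  set v : ℕ → ℝ := fun j => ω ^ j / (j !)
  have hu : Summable fun k => ‖u k‖ :=
    summable_of_ne_finset_zero (s := Finset.range (p + 1)) fun k hk => by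
      simp [u, Nat.choose_eq_zero_of_lt (not_le.1 (hk ∘ Finset.mem_range.2 ∘ lt_succ_of_le))]
  have hv : Summable fun j => ‖v j‖ := by
    simpa [v, abs_div, abs_pow] using Real.summable_pow_div_factorial |ω|
  have hb : b m p ω = (∑' k, u k) * ∑' j, v j := by
    rw [tsum_eq_sum (f := u) (s := Finset.range (p + 1)) fun k hk => by
        simp [u, Nat.choose_eq_zero_of_lt (not_le.1 (hk ∘ Finset.mem_range.2 ∘ lt_succ_of_le))],
      (NormedSpace.expSeries_div_hasSum_exp ω).tsum_eq, ← Real.exp_eq_exp_ℝ, b, mul_comm]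
    refine congrArg (· * _) (Finset.sum_congr rfl fun k hk => ?_)
    simp only [u]
    rw [cast_choose ℝ (Nat.lt_succ_iff.1 (Finset.mem_range.1 hk))]
    ring
  have hterm : ∀ n, ∑ kj ∈ antidiagonal n, u kj.1 * v kj.2
      = (m ! : ℝ) / ((m + n)! * n !) * ω ^ n * (p + m + n)! := fun n => by
    calc ∑ kj ∈ antidiagonal n, u kj.1 * v kj.2
        = ∑ kj ∈ antidiagonal n, (m + p)! * m ! / (m + n)! * ω ^ n *
            (p.choose kj.1 * (m + n).choose kj.2 : ℝ) :=
          Finset.sum_congr rfl fun ⟨k, j⟩ hkj => by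
            rw [HasAntidiagonal.mem_antidiagonal] at hkj
            subst hkj
            simp only [u, v]
            rw [← add_assoc, ← choose_symm_add, cast_add_choose, pow_add]
            field_simp
      _ = (m + p)! * m ! / (m + n)! * ω ^ n * (p + m + n).choose n := by
          rw [← Finset.mul_sum, add_assoc p, add_choose_eq]
          push_cast
          rfl
      _ = (m ! : ℝ) / ((m + n)! * n !) * ω ^ n * (p + m + n)! := by
          rw [← add_choose_mul_factorial_mul_factorial (p + m) n, add_comm m p]
          push_cast
          field_simp
  have hcauchy := (summable_norm_sum_mul_antidiagonal_of_summable_norm hu hv).of_norm.hasSum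
  rw [← tsum_mul_tsum_eq_tsum_sum_antidiagonal_of_summable_norm hu hv, ← hb] at hcauchy
  simpa only [hterm] using hcauchy

section FMoments

variable (m p : ℕ) (ω : ℝ)

theorem pow_mul_F_mul_exp_eq_tsum (x : ℝ) :
    x ^ p * F m (ω * x) * (x ^ m * Real.exp (-x))
      = ∑' k, (m ! : ℝ) / ((m + k)! * k !) * ω ^ k * (x ^ (p + m + k) * Real.exp (-x)) := by
  rw [F, ← tsum_mul_left, ← tsum_mul_right]
  exact tsum_congr fun k => by rw [mul_pow, pow_add, pow_add]; ring

theorem hasSum_integral_F_term :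
    HasSum (fun k => ∫ x in Ioi 0,
      (m ! : ℝ) / ((m + k)! * k !) * ω ^ k * (x ^ (p + m + k) * Real.exp (-x))) (b m p ω) := by
  simp_rw [integral_const_mul, integral_pow_mul_exp_neg_Ioi]
  exact hasSum_F_coeff_mul_factorial m p ω

variable {m p ω}

theorem F_term_nonneg (hω : 0 ≤ ω) (k : ℕ) :
    0 ≤ᵐ[volume.restrict (Ioi 0)] fun x : ℝ =>
      (m ! : ℝ) / ((m + k)! * k !) * ω ^ k * (x ^ (p + m + k) * Real.exp (-x)) := by
  filter_upwards [ae_restrict_mem measurableSet_Ioi] with x hx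
  have : 0 ≤ x := le_of_lt hx
  positivity

theorem integrableOn_pow_mul_F_mul_exp (hω : 0 ≤ ω) :
    IntegrableOn (fun x => x ^ p * F m (ω * x) * (x ^ m * Real.exp (-x))) (Ioi 0) := by
  simp_rw [IntegrableOn, pow_mul_F_mul_exp_eq_tsum]
  refine integrable_tsum_of_nonneg
    (fun k => (integrableOn_pow_mul_exp_neg_Ioi _).const_mul _) (F_term_nonneg hω)
    (ae_of_all _ fun x => ?_) (hasSum_integral_F_term m p ω).summable
  refine ((summable_F_coeff_mul_pow m (ω * x)).mul_right (x ^ (p + m) * Real.exp (-x))).congr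
    fun k => ?_
  rw [mul_pow, pow_add]
  ring

theorem integral_pow_mul_F_mul_exp (hω : 0 ≤ ω) :
    ∫ x in Ioi 0, x ^ p * F m (ω * x) * (x ^ m * Real.exp (-x)) = b m p ω := by
  simp_rw [pow_mul_F_mul_exp_eq_tsum]
  rw [integral_tsum_of_nonneg (fun k => (integrableOn_pow_mul_exp_neg_Ioi _).const_mul _)
    (F_term_nonneg hω) (hasSum_integral_F_term m p ω).summable]
  exact (hasSum_integral_F_term m p ω).tsum_eq

end FMoments

/-- Evaluation of the integral `ℱ_2^{(1)}` in Appendix A of the paper: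
`∫_{[0,∞)^K} det[λ_i^{j-1}] · det M(λ) · ∏ λ_i^m e^{-λ_i} dλ = K! det B`,
where the last `q` columns of `M(λ)` are `F_m(ω_j λ_i)` and the corresponding
entries of `B` are `(m+i+j-2)!` resp. `b_m(i-1, ω_j)` (stated with 0-based indices). -/
theorem stmt7 (m K q : ℕ)
    (ω : Fin q → ℝ) (hω : ∀ i, 0 ≤ ω i) :
    (∫ lam : Fin K → ℝ in Set.univ.pi fun _ => Set.Ici (0 : ℝ),
        (Matrix.of fun i j : Fin K => lam i ^ (j : ℕ)).det *
        (Matrix.of fun i j : Fin K =>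
          if h : (j : ℕ) < K - q then lam i ^ (j : ℕ)
          else F m (ω ⟨(j : ℕ) - (K - q), by have := j.isLt; omega⟩ * lam i)).det *
        ∏ i, lam i ^ m * Real.exp (-(lam i))
        ∂(Measure.pi fun _ => (volume : Measure ℝ)))
      = (K.factorial : ℝ) *
        (Matrix.of fun i j : Fin K =>
          if h : (j : ℕ) < K - q then ((m + (i : ℕ) + (j : ℕ)).factorial : ℝ)
          else b m (i : ℕ) (ω ⟨(j : ℕ) - (K - q), by have := j.isLt; omega⟩)).det := by
  set col : Fin K → ℝ → ℝ := fun j x => if h : (j : ℕ) < K - q then x ^ (j : ℕ)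
    else F m (ω ⟨(j : ℕ) - (K - q), by have := j.isLt; omega⟩ * x)
  set w : ℝ → ℝ := fun x => x ^ m * Real.exp (-x)
  have entry : ∀ r s : Fin K,
      IntegrableOn (fun x => x ^ (r : ℕ) * (col s x * w x)) (Ioi 0) ∧
      ∫ x in Ioi 0, x ^ (r : ℕ) * (col s x * w x)
        = if h : (s : ℕ) < K - q then ((m + (r : ℕ) + (s : ℕ))! : ℝ)
          else b m r (ω ⟨(s : ℕ) - (K - q), by have := s.isLt; omega⟩) := fun r s => by
    by_cases hs : (s : ℕ) < K - q
    · have h : ∀ x : ℝ, x ^ (r : ℕ) * (col s x * w x) = x ^ (m + r + s) * Real.exp (-x) :=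
        fun x => by simp only [col, w, dif_pos hs]; ring
      simp only [h, dif_pos hs]
      exact ⟨integrableOn_pow_mul_exp_neg_Ioi _, integral_pow_mul_exp_neg_Ioi _⟩
    · have h : ∀ x : ℝ, x ^ (r : ℕ) * (col s x * w x)
          = x ^ (r : ℕ) * F m (ω ⟨s - (K - q), by omega⟩ * x) * (x ^ m * Real.exp (-x)) :=
        fun x => by simp only [col, w, dif_neg hs]; ring
      simp only [h, dif_neg hs]
      exact ⟨integrableOn_pow_mul_F_mul_exp (hω _), integral_pow_mul_F_mul_exp (hω _)⟩
  calc _ = ∫ lam : Fin K → ℝ, (Matrix.of fun i j : Fin K => lam i ^ (j : ℕ)).det *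
          (Matrix.of fun i j : Fin K => col j (lam i) * w (lam i)).det
          ∂(Measure.pi fun _ => volume.restrict (Ioi 0)) := by
        rw [Measure.restrict_pi_pi, Measure.restrict_congr_set Ioi_ae_eq_Ici.symm]
        refine integral_congr_ae (ae_of_all _ fun lam => ?_)
        exact (mul_assoc _ _ _).trans (congrArg _ (det_of_mul_prod col w lam))
    _ = _ := by
        rw [integral_det_mul_det _ _ _ fun r s => (entry r s).1, Fintype.card_fin]
        congr 2
        ext r s
        exact (entry r s).2
end
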